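/- arXiv:2304.06791 — 2 statements merged into one kernel-verified Lean document; each statement's English description precedes it below -/
import Mathlib

section
/- Let l ≥ 1 be an integer, let s ≥ l+1 be a natural number, let δ ∈ k with δ = 0 in case s ≤ 2l, and set H̃ = X^{l+1} + δ·X^{2l+1}. (a) Suppose Φ ∈ k⟦X⟧ has constant coefficient 0 and coefficient of X equal to 1 and satisfies H̃∘Φ ≡ Φ′·H̃ mod X^{s+1}, and suppose there is an integer m with 2 ≤ m ≤ s such that the coefficient of X^m in Φ is nonzero while the coefficient of X^j in Φ is zero for all 2 ≤ j < m. Then m = l+1 or m ≥ s−l+1. (b) For all c_{s−l+1}, …, c_s ∈ k, the power series Ψ = X + Σ_{i=s−l+1}^{s} c_i X^i satisfies H̃∘Ψ ≡ Ψ′·H̃ mod X^{s+1}. -/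
open PowerSeries

variable {k : Type*} [Field k] [CharZero k]

/-- Substitution of `g` (with zero constant coefficient) into `f`. -/
noncomputable def comp (f g : PowerSeries k) : PowerSeries k :=
  PowerSeries.mk fun m => ∑ n ∈ Finset.range (m + 1),
    PowerSeries.coeff n f * PowerSeries.coeff m (g ^ n)

/-- The normal form generator. -/
noncomputable def Htilde (l : ℕ) (δ : k) : PowerSeries k :=
  X ^ (l + 1) + C δ * X ^ (2 * l + 1)

/-!
Write `Φ = X + W` with `X ^ m ∣ W`, `m ≥ 2`. Then `(X + W) ^ (n + 1)` agrees with
`X ^ (n + 1) + (n + 1) X ^ n W` up to order `n + 2m - 1`, so the defect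
`Φ ^ (n + 1) - Φ' X ^ (n + 1)` of the monomial generator `X ^ (n + 1)` starts in degree `n + m`
with coefficient `(n + 1 - m) c_m`. In `H̃` the monomial `δ X^(2l+1)` only contributes from
degree `2l + m > l + m` on. Hence `l + m ≤ s` forces `(l + 1 - m) c_m = 0`, while a
perturbation of `X` of order at least `s - l + 1` leaves a defect divisible by `X^(s+1)`.
-/

section Comp

variable {K : Type*} [Field K]

theorem comp_add (f g φ : K⟦X⟧) : comp (f + g) φ = comp f φ + comp g φ := by
  ext d
  simp only [comp, coeff_mk, map_add, add_mul, Finset.sum_add_distrib]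

theorem comp_C_mul (a : K) (f φ : K⟦X⟧) : comp (C a * f) φ = C a * comp f φ := by
  ext d
  simp only [comp, coeff_mk, coeff_C_mul, mul_assoc, Finset.mul_sum]

theorem comp_X_pow {φ : K⟦X⟧} (hφ : constantCoeff φ = 0) (n : ℕ) :
    comp (X ^ n) φ = φ ^ n := by
  ext d
  simp only [comp, coeff_mk, coeff_X_pow, ite_mul, one_mul, zero_mul, Finset.sum_ite_eq',
    Finset.mem_range]
  split_ifs with h
  · rfl
  · exact (X_pow_dvd_iff.mp (pow_dvd_pow_of_dvd (X_dvd_iff.mpr hφ) n) d (by omega)).symm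

theorem comp_Htilde {φ : K⟦X⟧} (hφ : constantCoeff φ = 0) (l : ℕ) (δ : K) :
    comp (Htilde l δ) φ = φ ^ (l + 1) + C δ * φ ^ (2 * l + 1) := by
  rw [Htilde, comp_add, comp_C_mul, comp_X_pow hφ, comp_X_pow hφ]

end Comp

section Defect

variable {R : Type*} [CommRing R]

/-- `comp (X ^ n) Φ - Φ' * X ^ n`: the Aczél–Jabotinsky defect of `Φ` for the generator `X ^ n`. -/
noncomputable def ajDefect (n : ℕ) (Φ : R⟦X⟧) : R⟦X⟧ :=
  Φ ^ n - d⁄dX R Φ * X ^ n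

theorem X_dvd_X_add_of_X_pow_dvd {W : R⟦X⟧} {r : ℕ} (hr : 1 ≤ r) (hW : X ^ r ∣ W) : X ∣ X + W :=
  dvd_add dvd_rfl ((dvd_pow_self X (by omega)).trans hW)

theorem X_pow_dvd_sub_X {Φ : R⟦X⟧} {m : ℕ} (h0 : constantCoeff Φ = 0) (h1 : coeff 1 Φ = 1)
    (h : ∀ j, 2 ≤ j → j < m → coeff j Φ = 0) : X ^ m ∣ Φ - X := by
  refine X_pow_dvd_iff.mpr fun j hj => ?_
  rw [map_sub, coeff_X]
  rcases j with _ | _ | j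
  · simp [h0]
  · simp [h1]
  · rw [h (j + 2) (by omega) hj, if_neg (by omega), sub_zero]

theorem X_pow_dvd_derivative {f : R⟦X⟧} {r : ℕ} (h : X ^ (r + 1) ∣ f) :
    X ^ r ∣ d⁄dX R f := by
  rw [X_pow_dvd_iff] at h ⊢
  intro d hd
  rw [coeff_derivative, h (d + 1) (by omega), zero_mul]

theorem X_pow_dvd_add_pow_sub_pow {W : R⟦X⟧} {r : ℕ} (hr : 1 ≤ r) (hW : X ^ r ∣ W) (n : ℕ) :
    X ^ (n + r - 1) ∣ (X + W) ^ n - X ^ n := by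
  induction n with
  | zero => simp
  | succ n ih =>
    rw [show (X + W) ^ (n + 1) - X ^ (n + 1) = (X + W) * ((X + W) ^ n - X ^ n) + X ^ n * W by
      ring]
    refine dvd_add ?_ ?_
    · rw [show n + 1 + r - 1 = 1 + (n + r - 1) by omega, pow_add, pow_one]
      exact mul_dvd_mul (X_dvd_X_add_of_X_pow_dvd (by omega) hW) ih
    · rw [show n + 1 + r - 1 = n + r by omega, pow_add]
      exact mul_dvd_mul dvd_rfl hW

theorem X_pow_dvd_add_pow_sub_pow_sub {W : R⟦X⟧} {m : ℕ} (hm : 1 ≤ m) (hW : X ^ m ∣ W) (n : ℕ) :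
    X ^ (n + 2 * m - 1) ∣ (X + W) ^ (n + 1) - X ^ (n + 1) - (n + 1 : R⟦X⟧) * X ^ n * W := by
  induction n with
  | zero => simp
  | succ n ih =>
    have step : (X + W) ^ (n + 1 + 1) - X ^ (n + 1 + 1)
          - ((↑(n + 1) : R⟦X⟧) + 1) * X ^ (n + 1) * W
        = (X + W) * ((X + W) ^ (n + 1) - X ^ (n + 1) - (n + 1 : R⟦X⟧) * X ^ n * W)
          + (n + 1 : R⟦X⟧) * X ^ n * W ^ 2 := by
      push_cast
      ring
    rw [step]
    refine dvd_add ?_ ?_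
    · rw [show n + 1 + 2 * m - 1 = 1 + (n + 2 * m - 1) by omega, pow_add, pow_one]
      exact mul_dvd_mul (X_dvd_X_add_of_X_pow_dvd (by omega) hW) ih
    · rw [show n + 1 + 2 * m - 1 = n + m * 2 by omega, pow_add, pow_mul]
      exact mul_dvd_mul (dvd_mul_left _ _) (pow_dvd_pow_of_dvd hW 2)

theorem X_pow_dvd_ajDefect {W : R⟦X⟧} {r : ℕ} (hr : 1 ≤ r) (hW : X ^ r ∣ W) (n : ℕ) :
    X ^ (n + r - 1) ∣ ajDefect n (X + W) := by
  have hW' : X ^ (r - 1) ∣ d⁄dX R W := X_pow_dvd_derivative (by rwa [Nat.sub_add_cancel hr])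
  rw [ajDefect, map_add, derivative_X, add_mul, one_mul, sub_add_eq_sub_sub]
  refine dvd_sub (X_pow_dvd_add_pow_sub_pow hr hW n) ?_
  rw [show n + r - 1 = r - 1 + n by omega, pow_add]
  exact mul_dvd_mul hW' dvd_rfl

theorem coeff_add_pow_succ {W : R⟦X⟧} {m : ℕ} (hm : 2 ≤ m) (hW : X ^ m ∣ W) (n : ℕ) :
    coeff (n + m) ((X + W) ^ (n + 1)) = (n + 1) * coeff m W := by
  have h := X_pow_dvd_iff.mp (X_pow_dvd_add_pow_sub_pow_sub (by omega) hW n) (n + m) (by omega)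
  have hc : (n + 1 : R⟦X⟧) = C ((n : R) + 1) := by simp
  rw [map_sub, map_sub, coeff_X_pow, if_neg (by omega), hc, mul_assoc, coeff_C_mul,
    coeff_X_pow_mul', if_pos (by omega), Nat.add_sub_cancel_left, sub_zero, sub_eq_zero] at h
  exact h

theorem coeff_ajDefect {W : R⟦X⟧} {m : ℕ} (hm : 2 ≤ m) (hW : X ^ m ∣ W) (n : ℕ) :
    coeff (n + m) (ajDefect (n + 1) (X + W)) = ((n : R) + 1 - m) * coeff m W := by
  obtain ⟨j, rfl⟩ : ∃ j, m = j + 1 := ⟨m - 1, by omega⟩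
  rw [ajDefect, map_sub, coeff_add_pow_succ hm hW, map_add, derivative_X, add_mul 1, one_mul,
    map_add, coeff_X_pow, if_neg (by omega), zero_add, coeff_mul_X_pow', if_pos (by omega),
    show n + (j + 1) - (n + 1) = j by omega, coeff_derivative]
  push_cast
  ring

end Defect

section Htilde

variable {K : Type*} [Field K]

theorem comp_Htilde_sub_derivative_mul {φ : K⟦X⟧} (hφ : constantCoeff φ = 0) (l : ℕ) (δ : K) :
    comp (Htilde l δ) φ - d⁄dX K φ * Htilde l δ
      = ajDefect (l + 1) φ + C δ * ajDefect (2 * l + 1) φ := by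
  rw [comp_Htilde hφ, Htilde, ajDefect, ajDefect]
  ring

theorem X_pow_dvd_comp_Htilde_sub {W : K⟦X⟧} {r : ℕ} (hr : 1 ≤ r) (hW : X ^ r ∣ W) (l : ℕ)
    (δ : K) : X ^ (l + r) ∣ comp (Htilde l δ) (X + W) - d⁄dX K (X + W) * Htilde l δ := by
  rw [comp_Htilde_sub_derivative_mul (X_dvd_iff.mp (X_dvd_X_add_of_X_pow_dvd hr hW))]
  refine dvd_add ?_ (dvd_mul_of_dvd_right ?_ _)
  · simpa [show l + 1 + r - 1 = l + r by omega] using X_pow_dvd_ajDefect hr hW (l + 1)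
  · exact (pow_dvd_pow X (by omega)).trans (X_pow_dvd_ajDefect hr hW (2 * l + 1))

theorem coeff_comp_Htilde_sub {W : K⟦X⟧} {m : ℕ} (hm : 2 ≤ m) (hW : X ^ m ∣ W) {l : ℕ}
    (hl : 1 ≤ l) (δ : K) :
    coeff (l + m) (comp (Htilde l δ) (X + W) - d⁄dX K (X + W) * Htilde l δ)
      = ((l : K) + 1 - m) * coeff m W := by
  have hδ : coeff (l + m) (ajDefect (2 * l + 1) (X + W)) = 0 :=
    X_pow_dvd_iff.mp (X_pow_dvd_ajDefect (by omega) hW (2 * l + 1)) _ (by omega)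
  rw [comp_Htilde_sub_derivative_mul (X_dvd_iff.mp (X_dvd_X_add_of_X_pow_dvd (by omega) hW)),
    map_add, coeff_ajDefect hm hW, coeff_C_mul, hδ, mul_zero, add_zero]

end Htilde

theorem aczel_jabotinsky_truncated_first_nonzero_coeff_general (l s : ℕ)
    (hl : 1 ≤ l) (hs : l + 1 ≤ s) (δ : k) :
    (∀ Φ : PowerSeries k,
      constantCoeff Φ = 0 → coeff 1 Φ = 1 →
      (X : PowerSeries k) ^ (s + 1) ∣
        comp (Htilde l δ) Φ - derivativeFun Φ * Htilde l δ →
      ∀ m : ℕ, 2 ≤ m → m ≤ s → coeff m Φ ≠ 0 →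
        (∀ j, 2 ≤ j → j < m → coeff j Φ = 0) →
        m = l + 1 ∨ s - l + 1 ≤ m) ∧
    (∀ c : ℕ → k,
      (X : PowerSeries k) ^ (s + 1) ∣
        comp (Htilde l δ) (X + ∑ i ∈ Finset.Icc (s - l + 1) s, C (c i) * X ^ i)
          - derivativeFun (X + ∑ i ∈ Finset.Icc (s - l + 1) s, C (c i) * X ^ i)
              * Htilde l δ) := by
  refine ⟨fun Φ h0 h1 hsol m hm _ hcm hlow => ?_, fun c => ?_⟩
  · have hW := X_pow_dvd_sub_X h0 h1 hlow
    obtain ⟨W, rfl⟩ : ∃ W, Φ = X + W := ⟨Φ - X, by ring⟩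
    rw [add_sub_cancel_left] at hW
    have hcm : coeff m W ≠ 0 := by simpa [coeff_X, show m ≠ 1 by omega] using hcm
    by_contra! hm_mid
    have hcoeff : ((l : k) + 1 - m) * coeff m W = 0 := by
      rw [← coeff_comp_Htilde_sub hm hW hl δ]
      exact X_pow_dvd_iff.mp hsol (l + m) (by omega)
    have hlm : (m : k) = (l + 1 : ℕ) := by
      push_cast
      linear_combination -(mul_eq_zero.mp hcoeff).resolve_right hcm
    exact hm_mid.1 (Nat.cast_injective hlm)
  · have hE : X ^ (s - l + 1) ∣ ∑ i ∈ Finset.Icc (s - l + 1) s, C (c i) * X ^ i :=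
      Finset.dvd_sum fun i hi => (pow_dvd_pow X (Finset.mem_Icc.mp hi).1).mul_left _
    have h := X_pow_dvd_comp_Htilde_sub (by omega) hE l δ
    rwa [show l + (s - l + 1) = s + 1 by omega] at h

/-- (a) If `Φ = X + c_m X^m + …` (`c_m ≠ 0`, `2 ≤ m ≤ s`) solves the truncated
Aczél–Jabotinsky equation with generator `H̃ = X^(l+1) + δX^(2l+1)` mod
`X^(s+1)`, then `m = l+1` or `m ≥ s-l+1`.
(b) `Ψ = X + Σ_{i=s-l+1}^s c_i X^i` always solves it. -/
theorem aczel_jabotinsky_truncated_first_nonzero_coeff (l s : ℕ)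
    (hl : 1 ≤ l) (hs : l + 1 ≤ s) (δ : k) (hδ : s ≤ 2 * l → δ = 0) :
    (∀ Φ : PowerSeries k,
      constantCoeff Φ = 0 → coeff 1 Φ = 1 →
      (X : PowerSeries k) ^ (s + 1) ∣
        comp (Htilde l δ) Φ - derivativeFun Φ * Htilde l δ →
      ∀ m : ℕ, 2 ≤ m → m ≤ s → coeff m Φ ≠ 0 →
        (∀ j, 2 ≤ j → j < m → coeff j Φ = 0) →
        m = l + 1 ∨ s - l + 1 ≤ m) ∧
    (∀ c : ℕ → k,
      (X : PowerSeries k) ^ (s + 1) ∣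
        comp (Htilde l δ) (X + ∑ i ∈ Finset.Icc (s - l + 1) s, C (c i) * X ^ i)
          - derivativeFun (X + ∑ i ∈ Finset.Icc (s - l + 1) s, C (c i) * X ^ i)
              * Htilde l δ) :=
  aczel_jabotinsky_truncated_first_nonzero_coeff_general l s hl hs δ
end

section
/- Let H ∈ k⟦X⟧ have constant coefficient 0 and coefficient of X equal to 1 (i.e. H = X + Σ_{n≥2} h_n X^n). (a) For every c ∈ k with c ≠ 0 there exists a unique Φ ∈ k⟦X⟧ with constant coefficient 0 and coefficient of X equal to c such that H∘Φ = Φ′·H. (b) Any two order-1 solutions commute: if Φ₁, Φ₂ have order 1 and satisfy H∘Φᵢ = Φᵢ′·H for i = 1, 2, then Φ₁∘Φ₂ = Φ₂∘Φ₁. Consequently the group of order-1 solutions of the Aczél–Jabotinsky equation with generator H is commutative and isomorphic to the multiplicative group k^× via Φ ↦ (coefficient of X in Φ). -/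
/-!
Comparing coefficients of `X ^ (m + 2)` in `H ∘ Φ = Φ' * H`, and using `h₀ = 0`, `h₁ = 1`,
`φ₀ = 0`, the equation reads `(m + 1) φ_{m+2} = P_m`, where `P_m` only involves the
coefficients of `H` and `φ₁, …, φ_{m+1}`. In characteristic zero this is a recursion, so an
order-1 solution exists and is unique once `φ₁ = c` is fixed. The chain rule makes solutions
closed under composition, and the linear coefficient of `Φ₁ ∘ Φ₂` is `φ₁ ψ₁`; hence `Φ₁ ∘ Φ₂`
and `Φ₂ ∘ Φ₁` are solutions with the same linear coefficient, so they coincide.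
-/

open PowerSeries

variable {k : Type*} [Field k] [CharZero k]

open Finset

namespace PowerSeries

section Recursion

variable {R : Type*} [Semiring R]

noncomputable def recursiveTrunc (G : ℕ → Polynomial R → R) : ℕ → Polynomial R
  | 0 => 0
  | m + 1 => recursiveTrunc G m + Polynomial.monomial m (G m (recursiveTrunc G m))

theorem trunc_eq_recursiveTrunc {G : ℕ → Polynomial R → R} {Φ : R⟦X⟧}
    (hΦ : ∀ m, coeff m Φ = G m (trunc m Φ)) (m : ℕ) : trunc m Φ = recursiveTrunc G m := by
  induction m with
  | zero => rfl
  | succ m ih => rw [trunc_succ, recursiveTrunc, hΦ, ih]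

theorem existsUnique_forall_coeff_eq_trunc (G : ℕ → Polynomial R → R) :
    ∃! Φ : R⟦X⟧, ∀ m, coeff m Φ = G m (trunc m Φ) := by
  set Ψ : R⟦X⟧ := mk fun m => G m (recursiveTrunc G m)
  have htrunc : ∀ m, trunc m Ψ = recursiveTrunc G m := by
    intro m
    induction m with
    | zero => rfl
    | succ m ih => rw [trunc_succ, recursiveTrunc, ih, coeff_mk]
  refine ⟨Ψ, fun m => by rw [htrunc, coeff_mk], fun Φ hΦ => ?_⟩
  ext m
  rw [hΦ, trunc_eq_recursiveTrunc hΦ, coeff_mk]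

end Recursion

section CommRing

variable {R : Type*} [CommRing R]

theorem X_pow_succ_dvd_pow_add_two_sub_pow {A B : R⟦X⟧} {m : ℕ} (hA : X ∣ A) (hB : X ∣ B)
    (hAB : X ^ m ∣ A - B) (n : ℕ) : X ^ (m + 1) ∣ A ^ (n + 2) - B ^ (n + 2) := by
  have hsplit : A ^ (n + 2) - B ^ (n + 2)
      = A * (A ^ (n + 1) - B ^ (n + 1)) + (A - B) * (B * B ^ n) := by ring
  rw [hsplit, pow_succ']
  exact dvd_add (mul_dvd_mul hA (hAB.trans (sub_dvd_pow_sub_pow A B _)))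
    (mul_comm (X : R⟦X⟧) _ ▸ mul_dvd_mul hAB (dvd_mul_of_dvd_left hB _))

theorem coeff_trunc_pow_add_two {A : R⟦X⟧} (hA : constantCoeff A = 0) (m n : ℕ) :
    coeff m ((trunc m A : R⟦X⟧) ^ (n + 2)) = coeff m (A ^ (n + 2)) := by
  have hdvd : X ^ (m + 1) ∣ A ^ (n + 2) - (trunc m A : R⟦X⟧) ^ (n + 2) := by
    refine X_pow_succ_dvd_pow_add_two_sub_pow (X_dvd_iff.2 hA) ?_ ?_ n
    · rw [X_dvd_iff, ← coeff_zero_eq_constantCoeff_apply, Polynomial.coeff_coe, coeff_trunc]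
      split_ifs <;> simp [hA]
    · exact ⟨_, sub_eq_of_eq_add (eq_X_pow_mul_shift_add_trunc m A)⟩
  rw [eq_comm, ← sub_eq_zero, ← map_sub]
  exact X_pow_dvd_iff.1 hdvd m m.lt_succ_self

theorem coeff_add_two_derivative_mul {H : R⟦X⟧} (hH0 : constantCoeff H = 0)
    (hH1 : coeff 1 H = 1) (A : R⟦X⟧) (m : ℕ) :
    coeff (m + 2) (d⁄dX R A * H) = (m + 2) * coeff (m + 2) A
      + ∑ p ∈ antidiagonal m, coeff p.1 (d⁄dX R A) * coeff (p.2 + 2) H := by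
  rw [coeff_mul, Nat.sum_antidiagonal_succ', Nat.sum_antidiagonal_succ']
  simp [hH0, hH1, coeff_derivative]
  ring

end CommRing

end PowerSeries

section Composition

variable {K : Type*} [Field K]

theorem coeff_comp (f g : K⟦X⟧) (m : ℕ) :
    coeff m (comp f g) = ∑ n ∈ range (m + 1), coeff n f * coeff m (g ^ n) :=
  coeff_mk _ _

theorem constantCoeff_comp (f g : K⟦X⟧) : constantCoeff (comp f g) = constantCoeff f := by
  rw [← coeff_zero_eq_constantCoeff_apply, coeff_comp]
  simp

theorem coeff_one_comp (f g : K⟦X⟧) : coeff 1 (comp f g) = coeff 1 f * coeff 1 g := by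
  simp [coeff_comp, sum_range_succ]

theorem comp_eq_subst (f : K⟦X⟧) {g : K⟦X⟧} (hg : constantCoeff g = 0) :
    comp f g = f.subst g := by
  ext m
  rw [coeff_comp, coeff_subst' (.of_constantCoeff_zero' hg),
    finsum_eq_sum_of_support_subset _ (s := range (m + 1))]
  · simp
  · intro n hn
    by_contra hnm
    apply hn
    dsimp only
    rw [X_pow_dvd_iff.1 (pow_dvd_pow_of_dvd (X_dvd_iff.2 hg) n) m (by simpa using hnm), smul_zero]

theorem coeff_add_two_comp {H : K⟦X⟧} (hH0 : constantCoeff H = 0) (hH1 : coeff 1 H = 1)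
    (A : K⟦X⟧) (m : ℕ) :
    coeff (m + 2) (comp H A)
      = coeff (m + 2) A + ∑ n ∈ range (m + 1), coeff (n + 2) H * coeff (m + 2) (A ^ (n + 2)) := by
  rw [coeff_comp, sum_range_succ', sum_range_succ']
  simp [hH0, hH1]
  ring

end Composition

namespace AczelJabotinsky

section LowerTerms

variable {R : Type*} [CommRing R]

/-- The coefficient of `X ^ (m + 2)` in `H ∘ A - A' * H`, without the terms involving
`coeff (m + 2) A`; for `constantCoeff A = 0` it only depends on the lower coefficients of `A`. -/
noncomputable def lowerTerms (H A : R⟦X⟧) (m : ℕ) : R :=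
  ∑ n ∈ range (m + 1), coeff (n + 2) H * coeff (m + 2) (A ^ (n + 2))
    - ∑ p ∈ antidiagonal m, coeff p.1 (d⁄dX R A) * coeff (p.2 + 2) H

theorem lowerTerms_trunc (H : R⟦X⟧) {A : R⟦X⟧} (hA : constantCoeff A = 0) (m : ℕ) :
    lowerTerms H (trunc (m + 2) A) m = lowerTerms H A m := by
  unfold lowerTerms
  congr 1
  · exact sum_congr rfl fun n _ => by rw [coeff_trunc_pow_add_two hA]
  · refine sum_congr rfl fun p hp => ?_
    rw [coeff_derivative, coeff_derivative,
      coeff_coe_trunc_of_lt (Nat.add_lt_add_right (Nat.antidiagonal.fst_lt hp) 1)]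

end LowerTerms

section Solutions

variable {K : Type*} [Field K]

/-- `derivativeFun Φ` is definitionally `d⁄dX K Φ`, so this is the Aczél–Jabotinsky equation. -/
def IsSolution (H Φ : K⟦X⟧) : Prop :=
  comp H Φ = d⁄dX K Φ * H

variable {H : K⟦X⟧}

theorem coeff_comp_sub_derivative_mul_of_lt_two (hH0 : constantCoeff H = 0)
    (hH1 : coeff 1 H = 1) (A : K⟦X⟧) {n : ℕ} (hn : n < 2) :
    coeff n (comp H A - d⁄dX K A * H) = 0 := by
  interval_cases n
  · rw [coeff_zero_eq_constantCoeff_apply, map_sub, map_mul, constantCoeff_comp, hH0, mul_zero,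
      sub_zero]
  · simp [coeff_one_comp, coeff_mul, Nat.sum_antidiagonal_succ', hH0, hH1, coeff_derivative]

theorem coeff_add_two_comp_sub_derivative_mul (hH0 : constantCoeff H = 0)
    (hH1 : coeff 1 H = 1) (A : K⟦X⟧) (m : ℕ) :
    coeff (m + 2) (comp H A - d⁄dX K A * H) = lowerTerms H A m - (m + 1) * coeff (m + 2) A := by
  rw [map_sub, coeff_add_two_comp hH0 hH1, coeff_add_two_derivative_mul hH0 hH1, lowerTerms]
  ring

theorem isSolution_iff (hH0 : constantCoeff H = 0) (hH1 : coeff 1 H = 1) (A : K⟦X⟧) :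
    IsSolution H A ↔ ∀ m : ℕ, (m + 1) * coeff (m + 2) A = lowerTerms H A m := by
  rw [IsSolution, ← sub_eq_zero, PowerSeries.ext_iff]
  refine ⟨fun h m => ?_, fun h n => ?_⟩
  · have := h (m + 2)
    rw [coeff_add_two_comp_sub_derivative_mul hH0 hH1, map_zero] at this
    linear_combination -this
  · rcases n with _ | _ | m
    · exact coeff_comp_sub_derivative_mul_of_lt_two hH0 hH1 A (by norm_num)
    · exact coeff_comp_sub_derivative_mul_of_lt_two hH0 hH1 A (by norm_num)
    · rw [coeff_add_two_comp_sub_derivative_mul hH0 hH1, h, sub_self, map_zero]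

theorem IsSolution.comp {Φ Ψ : K⟦X⟧} (hΦ0 : constantCoeff Φ = 0) (hΨ0 : constantCoeff Ψ = 0)
    (hΦ : IsSolution H Φ) (hΨ : IsSolution H Ψ) : IsSolution H (_root_.comp Φ Ψ) := by
  have hΦΨ0 : constantCoeff (_root_.comp Φ Ψ) = 0 := by rw [constantCoeff_comp, hΦ0]
  have hΨs : HasSubst Ψ := .of_constantCoeff_zero' hΨ0
  unfold IsSolution at *
  rw [comp_eq_subst _ hΦ0] at hΦ
  rw [comp_eq_subst _ hΨ0] at hΨ
  rw [comp_eq_subst _ hΦΨ0, comp_eq_subst _ hΨ0, ← subst_comp_subst_apply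
    (.of_constantCoeff_zero' hΦ0) hΨs, hΦ, subst_mul hΨs, hΨ, derivative_subst hΨs, mul_assoc]

end Solutions

section Recursion

noncomputable def coeffRecursion (H : k⟦X⟧) (c : k) : ℕ → Polynomial k → k
  | 0, _ => 0
  | 1, _ => c
  | m + 2, p => lowerTerms H p m / (m + 1)

theorem isSolution_iff_coeff_eq_coeffRecursion {H : k⟦X⟧} (hH0 : constantCoeff H = 0)
    (hH1 : coeff 1 H = 1) (c : k) (Φ : k⟦X⟧) :
    (constantCoeff Φ = 0 ∧ coeff 1 Φ = c ∧ IsSolution H Φ)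
      ↔ ∀ m, coeff m Φ = coeffRecursion H c m (trunc m Φ) := by
  have hrec : ∀ m, constantCoeff Φ = 0 →
      (coeff (m + 2) Φ = coeffRecursion H c (m + 2) (trunc (m + 2) Φ)
        ↔ (m + 1) * coeff (m + 2) Φ = lowerTerms H Φ m) := by
    intro m hΦ0
    rw [coeffRecursion, lowerTerms_trunc H hΦ0, eq_div_iff (Nat.cast_add_one_ne_zero m), mul_comm]
  rw [isSolution_iff hH0 hH1]
  constructor
  · rintro ⟨hΦ0, hΦ1, hΦ⟩ (_ | _ | m)
    · simpa [coeffRecursion] using hΦ0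
    · exact hΦ1
    · exact (hrec m hΦ0).2 (hΦ m)
  · intro h
    have hΦ0 : constantCoeff Φ = 0 := by simpa [coeffRecursion] using h 0
    exact ⟨hΦ0, h 1, fun m => (hrec m hΦ0).1 (h (m + 2))⟩

theorem existsUnique_isSolution {H : k⟦X⟧} (hH0 : constantCoeff H = 0) (hH1 : coeff 1 H = 1)
    (c : k) : ∃! Φ : k⟦X⟧, constantCoeff Φ = 0 ∧ coeff 1 Φ = c ∧ IsSolution H Φ :=
  (existsUnique_congr (isSolution_iff_coeff_eq_coeffRecursion hH0 hH1 c)).2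
    (existsUnique_forall_coeff_eq_trunc _)

end Recursion

end AczelJabotinsky

open AczelJabotinsky

/-- For a generator `H = X + Σ_{n ≥ 2} h_n X^n`:
(a) for every `c ≠ 0` there is a unique order-1 solution `Φ` of
`H∘Φ = Φ′·H` with linear coefficient `c`;
(b) any two order-1 solutions commute; moreover `Φ ↦ coeff 1 Φ` is
multiplicative on solutions, so the group of solutions is commutative and
isomorphic to `kˣ`. -/
theorem aczel_jabotinsky_solution_group_l_zero (H : PowerSeries k)
    (hH0 : constantCoeff H = 0) (hH1 : coeff 1 H = 1) :
    (∀ c : k, c ≠ 0 → ∃! Φ : PowerSeries k,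
        constantCoeff Φ = 0 ∧ coeff 1 Φ = c ∧
        comp H Φ = derivativeFun Φ * H) ∧
    (∀ Φ₁ Φ₂ : PowerSeries k,
        constantCoeff Φ₁ = 0 → coeff 1 Φ₁ ≠ 0 →
        constantCoeff Φ₂ = 0 → coeff 1 Φ₂ ≠ 0 →
        comp H Φ₁ = derivativeFun Φ₁ * H →
        comp H Φ₂ = derivativeFun Φ₂ * H →
        comp Φ₁ Φ₂ = comp Φ₂ Φ₁ ∧
          coeff 1 (comp Φ₁ Φ₂) = coeff 1 Φ₁ * coeff 1 Φ₂) := by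
  refine ⟨fun c _ => existsUnique_isSolution hH0 hH1 c,
    fun Φ₁ Φ₂ hΦ₁0 _ hΦ₂0 _ hΦ₁ hΦ₂ => ⟨?_, coeff_one_comp Φ₁ Φ₂⟩⟩
  exact (existsUnique_isSolution hH0 hH1 (coeff 1 Φ₁ * coeff 1 Φ₂)).unique
    ⟨by rw [constantCoeff_comp, hΦ₁0], coeff_one_comp Φ₁ Φ₂,
      IsSolution.comp hΦ₁0 hΦ₂0 hΦ₁ hΦ₂⟩
    ⟨by rw [constantCoeff_comp, hΦ₂0], by rw [coeff_one_comp, mul_comm],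
      IsSolution.comp hΦ₂0 hΦ₁0 hΦ₂ hΦ₁⟩
end
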